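/- arXiv:math/0607099 — 2 statements merged into one kernel-verified Lean document; each statement's English description precedes it below -/
import Mathlib

section
/- Let Z be a compact metric space, let n ∈ ℕ, let a, b ∈ M_n(C(Z)) be positive, and let m ∈ ℕ be such that rank(a)(z) + m ≤ rank(b)(z) for all z ∈ Z. Then for every ε > 0 there exists δ > 0 such that rank((a−ε)_+)(z) + m ≤ rank((b−δ)_+)(z) for all z ∈ Z. -/
/-! The rank of `(A - c)₊` counts the eigenvalues of `A` above `c`. A Weyl-type argument
bounds this count under perturbation: if `‖A - B‖ < c - d`, the span of the eigenvectors of `A`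
with eigenvalue `> c` meets the span of the eigenvectors of `B` with eigenvalue `≤ d` only in
`0`, so `rank (A - c)₊ ≤ rank (B - d)₊`. Near a point `w` this bounds `rank (a z - ε)₊` by
`rank (a w)`; and since only finitely many eigenvalues occur, `rank (b w) = rank (b w - η)₊` for
some `η > 0`, which bounds `rank (b w)` by `rank (b z - δ)₊` for `z` near `w` and small `δ`.
Compactness of `Z` makes `δ` uniform. -/

open scoped Matrix.Norms.L2Operator ComplexOrder
open Filter Topology

noncomputable section

/-- The cut-down `(A - ε)₊` of a matrix, obtained by applying `t ↦ max (t - ε) 0` via the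
continuous functional calculus.  (For a positive element of `Mₙ(C(Z))`, the value of
`(a - ε)₊` at a point `z` is exactly `matCutDown (a z) ε`.) -/
def matCutDown {n : ℕ} (A : Matrix (Fin n) (Fin n) ℂ) (ε : ℝ) : Matrix (Fin n) (Fin n) ℂ :=
  cfc (fun t : ℝ => max (t - ε) 0) A

open scoped InnerProductSpace

lemma OrthonormalBasis.inner_eq_zero_of_mem_span_image {𝕜 ι E : Type*} [RCLike 𝕜]
    [NormedAddCommGroup E] [InnerProductSpace 𝕜 E] [Fintype ι] (b : OrthonormalBasis ι 𝕜 E)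
    {s : Set ι} {x : E} (hx : x ∈ Submodule.span 𝕜 (b '' s)) {i : ι} (hi : i ∉ s) :
    ⟪b i, x⟫_𝕜 = 0 := by
  rw [← b.coe_toBasis, Module.Basis.mem_span_image] at hx
  rw [← b.repr_apply_apply, ← b.coe_toBasis_repr_apply]
  exact Finsupp.notMem_support_iff.1 fun h => hi (hx h)

lemma OrthonormalBasis.finrank_span_image {𝕜 ι E : Type*} [RCLike 𝕜]
    [NormedAddCommGroup E] [InnerProductSpace 𝕜 E] [Fintype ι] (b : OrthonormalBasis ι 𝕜 E)
    (p : ι → Prop) [DecidablePred p] :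
    Module.finrank 𝕜 (Submodule.span 𝕜 (b '' {i | p i})) = Fintype.card {i // p i} := by
  rw [Set.image_eq_range]
  exact finrank_span_eq_card (b.orthonormal.linearIndependent.comp _ Subtype.val_injective)

lemma Matrix.re_inner_toEuclideanLin_sub_le {𝕜 ι : Type*} [RCLike 𝕜] [Fintype ι]
    [DecidableEq ι] (A B : Matrix ι ι 𝕜) (x : EuclideanSpace 𝕜 ι) :
    RCLike.re ⟪x, toEuclideanLin A x⟫_𝕜 - RCLike.re ⟪x, toEuclideanLin B x⟫_𝕜
      ≤ ‖A - B‖ * ‖x‖ ^ 2 :=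
  calc RCLike.re ⟪x, toEuclideanLin A x⟫_𝕜 - RCLike.re ⟪x, toEuclideanLin B x⟫_𝕜
      = RCLike.re ⟪x, toEuclideanCLM (𝕜 := 𝕜) (A - B) x⟫_𝕜 := by
        rw [← map_sub, ← inner_sub_right, map_sub]; rfl
    _ ≤ ‖x‖ * ‖toEuclideanCLM (𝕜 := 𝕜) (A - B) x‖ := re_inner_le_norm _ _
    _ ≤ ‖x‖ * (‖A - B‖ * ‖x‖) := by
        gcongr
        exact (toEuclideanCLM (𝕜 := 𝕜) (A - B)).le_opNorm x
    _ = ‖A - B‖ * ‖x‖ ^ 2 := by ring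

namespace Matrix.IsHermitian

variable {𝕜 ι : Type*} [RCLike 𝕜] [Fintype ι] [DecidableEq ι] {A B : Matrix ι ι 𝕜}

lemma rank_cfc (hA : A.IsHermitian) (f : ℝ → ℝ) :
    (cfc f A).rank = Fintype.card {i // f (hA.eigenvalues i) ≠ 0} := by
  rw [hA.cfc_eq, Matrix.IsHermitian.cfc, Unitary.conjStarAlgAut_apply, ← Unitary.coe_star]
  simp [-isUnit_iff_ne_zero, -Unitary.coe_star, Matrix.rank_diagonal, Function.comp]

lemma toEuclideanCLM_eigenvectorBasis (hA : A.IsHermitian) (i : ι) :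
    toEuclideanCLM (𝕜 := 𝕜) A (hA.eigenvectorBasis i)
      = (hA.eigenvalues i : 𝕜) • hA.eigenvectorBasis i := by
  ext1
  rw [ofLp_toEuclideanCLM, hA.mulVec_eigenvectorBasis, WithLp.ofLp_smul,
    RCLike.real_smul_eq_coe_smul (K := 𝕜)]

lemma re_inner_toEuclideanLin_self_eq_sum (hA : A.IsHermitian) (x : EuclideanSpace 𝕜 ι) :
    RCLike.re ⟪x, toEuclideanLin A x⟫_𝕜
      = ∑ i, hA.eigenvalues i * ‖⟪hA.eigenvectorBasis i, x⟫_𝕜‖ ^ 2 := by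
  have hsymm := isSymmetric_toEuclideanLin_iff.mpr hA
  rw [← hA.eigenvectorBasis.sum_inner_mul_inner, map_sum]
  refine Finset.sum_congr rfl fun i _ => ?_
  rw [← hsymm, ← coe_toEuclideanCLM_eq_toEuclideanLin, ContinuousLinearMap.coe_coe,
    toEuclideanCLM_eigenvectorBasis, inner_smul_left, RCLike.conj_ofReal, ← mul_assoc,
    mul_comm _ (hA.eigenvalues i : 𝕜), mul_assoc, ← inner_conj_symm x, RCLike.conj_mul]
  norm_cast

lemma mul_norm_sq_le_re_inner_of_mem_span (hA : A.IsHermitian) {s : Set ι} {c : ℝ}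
    (hs : ∀ i ∈ s, c ≤ hA.eigenvalues i) {x : EuclideanSpace 𝕜 ι}
    (hx : x ∈ Submodule.span 𝕜 (hA.eigenvectorBasis '' s)) :
    c * ‖x‖ ^ 2 ≤ RCLike.re ⟪x, toEuclideanLin A x⟫_𝕜 := by
  rw [re_inner_toEuclideanLin_self_eq_sum hA, ← hA.eigenvectorBasis.sum_sq_norm_inner_right,
    Finset.mul_sum]
  refine Finset.sum_le_sum fun i _ => ?_
  by_cases hi : i ∈ s
  · gcongr
    exact hs i hi
  · simp [hA.eigenvectorBasis.inner_eq_zero_of_mem_span_image hx hi]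

lemma re_inner_le_mul_norm_sq_of_mem_span (hA : A.IsHermitian) {s : Set ι} {d : ℝ}
    (hs : ∀ i ∈ s, hA.eigenvalues i ≤ d) {x : EuclideanSpace 𝕜 ι}
    (hx : x ∈ Submodule.span 𝕜 (hA.eigenvectorBasis '' s)) :
    RCLike.re ⟪x, toEuclideanLin A x⟫_𝕜 ≤ d * ‖x‖ ^ 2 := by
  rw [re_inner_toEuclideanLin_self_eq_sum hA, ← hA.eigenvectorBasis.sum_sq_norm_inner_right,
    Finset.mul_sum]
  refine Finset.sum_le_sum fun i _ => ?_
  by_cases hi : i ∈ s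
  · gcongr
    exact hs i hi
  · simp [hA.eigenvectorBasis.inner_eq_zero_of_mem_span_image hx hi]

theorem card_lt_eigenvalues_le_of_norm_sub_lt (hA : A.IsHermitian) (hB : B.IsHermitian)
    {c d : ℝ} (h : ‖A - B‖ < c - d) :
    Fintype.card {i // c < hA.eigenvalues i} ≤ Fintype.card {i // d < hB.eigenvalues i} := by
  classical
  set V := Submodule.span 𝕜 (hA.eigenvectorBasis '' {i | c < hA.eigenvalues i})
  set W := Submodule.span 𝕜 (hB.eigenvectorBasis '' {i | ¬ d < hB.eigenvalues i})
  have hVW : Disjoint V W := by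
    refine Submodule.disjoint_def.2 fun x hxV hxW => ?_
    by_contra hx
    have hAx := hA.mul_norm_sq_le_re_inner_of_mem_span (fun i hi => le_of_lt hi) hxV
    have hBx := hB.re_inner_le_mul_norm_sq_of_mem_span (fun i hi => not_lt.1 hi) hxW
    have hABx := re_inner_toEuclideanLin_sub_le A B x
    have hgap := mul_pos (sub_pos.2 (lt_sub_iff_add_lt'.1 h)) (pow_pos (norm_pos_iff.2 hx) 2)
    linarith
  have hdim := Submodule.finrank_add_finrank_le_of_disjoint hVW
  rw [hA.eigenvectorBasis.finrank_span_image, hB.eigenvectorBasis.finrank_span_image,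
    finrank_euclideanSpace, Fintype.card_subtype_compl] at hdim
  have := Fintype.card_subtype_le fun i => d < hB.eigenvalues i
  omega

end Matrix.IsHermitian

section matCutDown

variable {n : ℕ} {A B : Matrix (Fin n) (Fin n) ℂ}

lemma rank_matCutDown (hA : A.IsHermitian) (c : ℝ) :
    (matCutDown A c).rank = Fintype.card {i // c < hA.eigenvalues i} := by
  rw [matCutDown, hA.rank_cfc]
  exact Fintype.card_congr <| Equiv.subtypeEquivRight fun i => by
    rw [ne_eq, max_eq_right_iff, not_le, sub_pos]

lemma matCutDown_zero (hA : A.PosSemidef) : matCutDown A 0 = A := by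
  have hspec : ∀ t ∈ spectrum ℝ A, 0 ≤ t := by
    rw [hA.1.spectrum_real_eq_range_eigenvalues]
    rintro _ ⟨i, rfl⟩
    exact hA.eigenvalues_nonneg i
  rw [matCutDown, cfc_congr (g := fun t => t) fun t ht => by simpa using hspec t ht]
  exact cfc_id' ℝ A hA.1

lemma rank_matCutDown_le_of_norm_sub_lt (hA : A.IsHermitian) (hB : B.IsHermitian) {c d : ℝ}
    (h : ‖A - B‖ < c - d) : (matCutDown A c).rank ≤ (matCutDown B d).rank := by
  rw [rank_matCutDown hA, rank_matCutDown hB]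
  exact hA.card_lt_eigenvalues_le_of_norm_sub_lt hB h

lemma exists_rank_matCutDown_eq (hA : A.IsHermitian) (c : ℝ) :
    ∃ η > c, (matCutDown A η).rank = (matCutDown A c).rank := by
  have hgap : ∀ᶠ η in 𝓝[>] c, ∀ i, c < hA.eigenvalues i → η < hA.eigenvalues i :=
    eventually_all.2 fun i => by
      by_cases hi : c < hA.eigenvalues i
      · exact eventually_nhdsWithin_of_eventually_nhds <|
          (eventually_lt_nhds hi).mono fun _ h _ => h
      · exact Eventually.of_forall fun _ h => absurd h hi
  obtain ⟨η, hη, hcη⟩ := (hgap.and self_mem_nhdsWithin).exists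
  refine ⟨η, hcη, ?_⟩
  rw [rank_matCutDown hA, rank_matCutDown hA]
  exact Fintype.card_congr <| Equiv.subtypeEquivRight fun i => ⟨lt_trans hcη, hη i⟩

end matCutDown

lemma CompactSpace.exists_pos_forall_of_eventually_nhds_zero {Z : Type*} [TopologicalSpace Z]
    [CompactSpace Z] {P : ℝ → Z → Prop} (h : ∀ z, ∀ᶠ p in 𝓝 ((0 : ℝ), z), P p.1 p.2) :
    ∃ δ > 0, ∀ z, P δ z := by
  have hunif := isCompact_univ.eventually_forall_of_forall_eventually fun z _ => h z
  obtain ⟨δ, hδ, hpos⟩ :=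
    ((hunif.filter_mono nhdsWithin_le_nhds).and (self_mem_nhdsWithin (s := Set.Ioi 0))).exists
  exact ⟨δ, hpos, fun z => hδ z trivial⟩

/-- if `Z` is a compact metric space, `a, b ∈ Mₙ(C(Z))` are positive and
`rank(a)(z) + m ≤ rank(b)(z)` for all `z ∈ Z`, then for every `ε > 0` there is `δ > 0` with
`rank((a-ε)₊)(z) + m ≤ rank((b-δ)₊)(z)` for all `z ∈ Z`. -/
theorem rank_cutDown_le {Z : Type*} [MetricSpace Z] [CompactSpace Z] {n : ℕ}
    (a b : C(Z, Matrix (Fin n) (Fin n) ℂ))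
    (ha : ∀ z, (a z).PosSemidef) (hb : ∀ z, (b z).PosSemidef)
    (m : ℕ) (hrank : ∀ z, (a z).rank + m ≤ (b z).rank) :
    ∀ ε > (0 : ℝ), ∃ δ > (0 : ℝ), ∀ z,
      (matCutDown (a z) ε).rank + m ≤ (matCutDown (b z) δ).rank := by
  intro ε hε
  refine CompactSpace.exists_pos_forall_of_eventually_nhds_zero fun w => ?_
  obtain ⟨η, hη, hbη⟩ := exists_rank_matCutDown_eq (hb w).1 0
  have ha_near : ∀ᶠ p : ℝ × Z in 𝓝 (0, w), ‖a p.2 - a w‖ < ε - 0 :=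
    ContinuousAt.eventually_lt (by fun_prop) continuousAt_const (by simpa using hε)
  have hb_near : ∀ᶠ p : ℝ × Z in 𝓝 (0, w), ‖b w - b p.2‖ < η - p.1 :=
    ContinuousAt.eventually_lt (by fun_prop) (by fun_prop) (by simpa using hη)
  filter_upwards [ha_near, hb_near] with ⟨δ, z⟩ haz hbz
  calc (matCutDown (a z) ε).rank + m ≤ (matCutDown (a w) 0).rank + m := by
        gcongr
        exact rank_matCutDown_le_of_norm_sub_lt (ha z).1 (ha w).1 haz
    _ = (a w).rank + m := by rw [matCutDown_zero (ha w)]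
    _ ≤ (b w).rank := hrank w
    _ = (matCutDown (b w) η).rank := by rw [hbη, matCutDown_zero (hb w)]
    _ ≤ (matCutDown (b z) δ).rank :=
        rank_matCutDown_le_of_norm_sub_lt (hb w).1 (hb z).1 hbz
end
end

section
/- Let a, b ∈ M_n(ℂ) be positive matrices. Then a is Cuntz subequivalent to b if and only if rank(a) ≤ rank(b). -/
/-!
Rank is lower semicontinuous and `rank (v * b * v*) ≤ rank b`, so a limit of such matrices has
rank at most `rank b`. Conversely, unitary diagonalisation reduces the problem to diagonal
matrices with nonnegative entries `d` and `e` whose supports satisfy `#supp d ≤ #supp e`: a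
permutation `σ` sending `supp d` into `supp e`, followed by the diagonal rescaling
`√(dᵢ / e_{σ i})`, gives a single `w` with `w * b * w* = a` exactly.
-/

open scoped Matrix.Norms.L2Operator ComplexOrder
open Filter Topology

noncomputable section

/-- `a` is Cuntz subequivalent to `b`: there is a sequence `(vᵢ)` with
`‖vᵢ * b * vᵢ* - a‖ → 0`. -/
def CuntzLE {A : Type*} [NonUnitalNormedRing A] [StarRing A] (a b : A) : Prop :=
  ∃ v : ℕ → A, Tendsto (fun i => ‖v i * b * star (v i) - a‖) atTop (𝓝 0)

theorem Equiv.Perm.exists_forall_of_card_le {ι : Type*} [Fintype ι] {p q : ι → Prop}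
    [DecidablePred p] [DecidablePred q] (h : Fintype.card {i // p i} ≤ Fintype.card {i // q i}) :
    ∃ σ : Equiv.Perm ι, ∀ i, p i → q (σ i) := by
  obtain ⟨f⟩ := Function.Embedding.nonempty_of_card_le h
  obtain ⟨σ, hσ⟩ := Equiv.Perm.exists_extending_pair ((↑) : {i // p i} → ι)
    (fun i => (f i : ι)) Subtype.val_injective (Subtype.val_injective.comp f.injective)
  exact ⟨σ, fun i hi => hσ ⟨i, hi⟩ ▸ (f ⟨i, hi⟩).2⟩

theorem Real.sqrt_div_mul_mul_sqrt_div {x y : ℝ} (hx : 0 ≤ x) (hy : 0 ≤ y)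
    (hxy : x ≠ 0 → y ≠ 0) : √(x / y) * y * √(x / y) = x := by
  rcases eq_or_ne x 0 with rfl | hx0
  · simp
  · rw [mul_right_comm, Real.mul_self_sqrt (div_nonneg hx hy), div_mul_cancel₀ _ (hxy hx0)]

namespace Matrix

section Rank

variable {m n 𝕜 : Type*} [Fintype m] [Fintype n] [NontriviallyNormedField 𝕜] [CompleteSpace 𝕜]

theorem isOpen_setOf_nat_le_rank (k : ℕ) : IsOpen {M : Matrix m n 𝕜 | k ≤ M.rank} := by
  classical
  let toCLM : Matrix m n 𝕜 →ₗ[𝕜] (n → 𝕜) →L[𝕜] (m → 𝕜) :=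
    LinearMap.toContinuousLinearMap.toLinearMap ∘ₗ Matrix.toLin'.toLinearMap
  convert (isOpen_setOfPred_nat_le_rank k).preimage
    (LinearMap.continuous_of_finiteDimensional toCLM) using 1
  simp only [rank, LinearMap.rank, ← Module.finrank_eq_rank, Nat.cast_le, Set.preimage_ofPred_eq,
    LinearMap.coe_toContinuousLinearMap, toCLM, LinearMap.comp_apply, LinearEquiv.coe_coe,
    toLin'_apply']
  rfl

theorem isClosed_setOf_rank_le (k : ℕ) : IsClosed {M : Matrix m n 𝕜 | M.rank ≤ k} := by
  simpa only [← isOpen_compl_iff, Set.compl_ofPred, not_le, Nat.lt_iff_add_one_le]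
    using isOpen_setOf_nat_le_rank (k + 1)

end Rank

theorem permMatrix_mul_mul_conjTranspose {n R : Type*} [Fintype n] [DecidableEq n]
    [NonAssocSemiring R] [StarRing R] (σ : Equiv.Perm n) (M : Matrix n n R) :
    σ.permMatrix R * M * (σ.permMatrix R)ᴴ = M.submatrix σ σ := by
  rw [conjTranspose_permMatrix, PEquiv.toMatrix_toPEquiv_mul, Equiv.Perm.permMatrix,
    PEquiv.mul_toMatrix_toPEquiv, submatrix_submatrix]
  rfl

variable {n 𝕜 : Type*} [Fintype n] [DecidableEq n] [RCLike 𝕜]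

theorem exists_mul_diagonal_mul_conjTranspose_eq {d e : n → ℝ} (hd : 0 ≤ d) (he : 0 ≤ e)
    (h : Fintype.card {i // d i ≠ 0} ≤ Fintype.card {i // e i ≠ 0}) :
    ∃ G : Matrix n n 𝕜,
      G * diagonal (RCLike.ofReal ∘ e) * Gᴴ = diagonal (RCLike.ofReal ∘ d) := by
  obtain ⟨σ, hσ⟩ := Equiv.Perm.exists_forall_of_card_le h
  let s : n → 𝕜 := fun i => (√(d i / e (σ i)) : ℝ)
  let P := σ.permMatrix 𝕜
  refine ⟨diagonal s * P, ?_⟩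
  calc diagonal s * P * diagonal (RCLike.ofReal ∘ e) * (diagonal s * P)ᴴ
      = diagonal s * (P * diagonal (RCLike.ofReal ∘ e) * Pᴴ) * (diagonal s)ᴴ := by
        simp only [conjTranspose_mul, Matrix.mul_assoc]
    _ = diagonal (s * (RCLike.ofReal ∘ e ∘ σ) * s) := by
      rw [permMatrix_mul_mul_conjTranspose, submatrix_diagonal_equiv, diagonal_conjTranspose,
        diagonal_mul_diagonal, diagonal_mul_diagonal]
      congr 2 with i
      simp [s]
    _ = diagonal (RCLike.ofReal ∘ d) := by
      congr 1 with i
      simp only [s, Pi.mul_apply, Function.comp_apply, ← RCLike.ofReal_mul]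
      rw [Real.sqrt_div_mul_mul_sqrt_div (hd i) (he _) (hσ i)]

theorem PosSemidef.exists_mul_mul_conjTranspose_eq_of_rank_le {a b : Matrix n n 𝕜}
    (ha : a.PosSemidef) (hb : b.PosSemidef) (h : a.rank ≤ b.rank) :
    ∃ w : Matrix n n 𝕜, w * b * wᴴ = a := by
  rw [ha.1.rank_eq_card_non_zero_eigs, hb.1.rank_eq_card_non_zero_eigs] at h
  obtain ⟨G, hG⟩ := exists_mul_diagonal_mul_conjTranspose_eq (𝕜 := 𝕜) ha.eigenvalues_nonneg
    hb.eigenvalues_nonneg h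
  set U := (ha.1.eigenvectorUnitary : Matrix n n 𝕜)
  set V := (hb.1.eigenvectorUnitary : Matrix n n 𝕜)
  have hV : Vᴴ * b * V = diagonal (RCLike.ofReal ∘ hb.1.eigenvalues) := by
    simpa [V, star_eq_conjTranspose] using hb.1.conjStarAlgAut_star_eigenvectorUnitary
  refine ⟨U * G * Vᴴ, ?_⟩
  calc U * G * Vᴴ * b * (U * G * Vᴴ)ᴴ = U * (G * (Vᴴ * b * V) * Gᴴ) * Uᴴ := by
        simp only [conjTranspose_mul, conjTranspose_conjTranspose, Matrix.mul_assoc]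
    _ = a := by
      rw [hV, hG]
      simpa [U, star_eq_conjTranspose] using ha.1.spectral_theorem.symm

end Matrix

theorem CuntzLE.of_mul_mul_star_eq {A : Type*} [NonUnitalNormedRing A] [StarRing A] {a b v : A}
    (h : v * b * star v = a) : CuntzLE a b :=
  ⟨fun _ => v, by simp [h]⟩

theorem CuntzLE.rank_le {n 𝕜 : Type*} [Fintype n] [DecidableEq n] [RCLike 𝕜] {a b : Matrix n n 𝕜}
    (h : CuntzLE a b) : a.rank ≤ b.rank := by
  obtain ⟨v, hv⟩ := h
  -- the L2 operator norm induces the entrywise topology, to which `isClosed_setOf_rank_le` refers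
  refine (Matrix.isClosed_setOf_rank_le b.rank).mem_of_tendsto
    (tendsto_iff_norm_sub_tendsto_zero.mpr hv) (Eventually.of_forall fun i => ?_)
  exact (Matrix.rank_mul_le_left _ _).trans (Matrix.rank_mul_le_right _ _)

/-- for positive matrices `a, b ∈ Mₙ(ℂ)`, `a` is Cuntz subequivalent to `b`
if and only if `rank(a) ≤ rank(b)`. -/
theorem cuntzLE_iff_rank_le {n : ℕ} (a b : Matrix (Fin n) (Fin n) ℂ)
    (ha : a.PosSemidef) (hb : b.PosSemidef) :
    CuntzLE a b ↔ a.rank ≤ b.rank := by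
  refine ⟨CuntzLE.rank_le, fun h => ?_⟩
  obtain ⟨w, hw⟩ := ha.exists_mul_mul_conjTranspose_eq_of_rank_le hb h
  exact CuntzLE.of_mul_mul_star_eq hw

end
end
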